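/- arXiv:2409.14219 — 3 statements merged into one kernel-verified Lean document; each statement's English description precedes it below -/
import Mathlib

section
/- In every finite extensive-form game, if player i has perfect recall, then for every mixed strategy of player i there exists an equivalent behavioral strategy of player i; that is, against every fixed profile of behavioral strategies of the other players (including a fixed chance policy), the mixed strategy and the behavioral strategy induce the same probability on every terminal history. (Theorem 1, Planning Equivalence / Kuhn's theorem, mixed-to-behavioral direction.) -/
open scoped BigOperators Classical

namespace Stmt0

variable {A : Type*} [Fintype A] [DecidableEq A] [Inhabited A]

/-- The available actions at a history `h`: those `a` with `h ++ [a] ∈ H`. -/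
def avail (H : Finset (List A)) (h : List A) : Finset A :=
  Finset.univ.filter (fun a => h ++ [a] ∈ H)

/-- A history is terminal if it lies in `H` and no one-step extension does. -/
def IsTerminal (H : Finset (List A)) (h : List A) : Prop :=
  h ∈ H ∧ ∀ a : A, h ++ [a] ∉ H

/-- The probability of reaching the history `z` when at every proper prefix
`z.take k` the action `z.getD k default` taken there along `z` is chosen with
probability `f (z.take k) (z.getD k default)`. -/
noncomputable def pathProb (f : List A → A → ℝ) (z : List A) : ℝ :=
  ∏ k ∈ Finset.range z.length, f (z.take k) (z.getD k default)

/-- Player `i`'s experience along a history `h`: the list of pairs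
(information set, action chosen) recorded at exactly those proper prefixes of `h`
at which `i` moves (`ι` assigns information sets, `P` is the turn function). -/
noncomputable def exper {N I : Type*} (P : List A → N) (ι : List A → I) (i : N)
    (h : List A) : List (I × A) :=
  (List.range h.length).filterMap
    (fun k => if P (h.take k) = i then some (ι (h.take k), h.getD k default) else none)


/-- Auxiliary: total μ-weight of pure strategies compatible with experience `e`. -/
noncomputable def W {I : Type*} [Fintype I] (μ : (I → A) → ℝ) (e : List (I × A)) : ℝ :=
  ∑ s : I → A, μ s * (if ∀ p ∈ e, s p.1 = p.2 then 1 else 0)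

lemma W_nonneg {I : Type*} [Fintype I] (μ : (I → A) → ℝ) (hμ0 : ∀ s, 0 ≤ μ s)
    (e : List (I × A)) : 0 ≤ W μ e := by
  refine Finset.sum_nonneg fun s _ => mul_nonneg (hμ0 s) ?_
  split <;> norm_num

lemma W_append_le {I : Type*} [Fintype I] (μ : (I → A) → ℝ) (hμ0 : ∀ s, 0 ≤ μ s)
    (e e' : List (I × A)) : W μ (e ++ e') ≤ W μ e := by
  refine Finset.sum_le_sum fun s _ => mul_le_mul_of_nonneg_left ?_ (hμ0 s)
  by_cases h : ∀ p ∈ e ++ e', s p.1 = p.2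
  · rw [if_pos h, if_pos (fun p hp => h p (List.mem_append_left _ hp))]
  · rw [if_neg h]
    split <;> norm_num

/-- The behavioral strategy built from the mixed strategy `μ`. -/
noncomputable def behav {N I : Type*} [Fintype I] (H : Finset (List A)) (P : List A → N)
    (ι : List A → I) (i : N) (μ : (I → A) → ℝ) (u : I) (a : A) : ℝ :=
  if hg : ∃ h, h ∈ H ∧ ¬IsTerminal H h ∧ P h = i ∧ ι h = u then
    if W μ (exper P ι i hg.choose) = 0 then ((avail H hg.choose).card : ℝ)⁻¹
    else W μ (exper P ι i hg.choose ++ [(u, a)]) / W μ (exper P ι i hg.choose)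
  else 0

lemma behav_eq {N I : Type*} [Fintype I] (H : Finset (List A)) (P : List A → N)
    (ι : List A → I) (i : N) (μ : (I → A) → ℝ)
    (hinfo : ∀ h ∈ H, ∀ h' ∈ H, ¬IsTerminal H h → ¬IsTerminal H h' →
      P h = i → P h' = i → ι h = ι h' → avail H h = avail H h')
    (hrecall : ∀ h ∈ H, ∀ h' ∈ H, ¬IsTerminal H h → ¬IsTerminal H h' →
      P h = i → P h' = i → ι h = ι h' → exper P ι i h = exper P ι i h')
    (h : List A) (hH : h ∈ H) (hnt : ¬IsTerminal H h) (hP : P h = i) (a : A) :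
    behav H P ι i μ (ι h) a =
      if W μ (exper P ι i h) = 0 then ((avail H h).card : ℝ)⁻¹
      else W μ (exper P ι i h ++ [(ι h, a)]) / W μ (exper P ι i h) := by
  have hg : ∃ h', h' ∈ H ∧ ¬IsTerminal H h' ∧ P h' = i ∧ ι h' = ι h := ⟨h, hH, hnt, hP, rfl⟩
  obtain ⟨h0H, h0nt, h0P, h0ι⟩ := hg.choose_spec
  have he : exper P ι i hg.choose = exper P ι i h :=
    hrecall _ h0H _ hH h0nt hnt h0P hP h0ι
  have ha : avail H hg.choose = avail H h := hinfo _ h0H _ hH h0nt hnt h0P hP h0ι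
  unfold behav
  rw [dif_pos hg, he, ha]

lemma exper_take {N I : Type*} (P : List A → N) (ι : List A → I) (i : N)
    (z : List A) {k : ℕ} (hk : k ≤ z.length) :
    exper P ι i (z.take k) = (List.range k).filterMap
      (fun j => if P (z.take j) = i then some (ι (z.take j), z.getD j default) else none) := by
  unfold exper
  rw [List.length_take, min_eq_left hk]
  refine List.filterMap_congr fun j hj => ?_
  have hj' : j < k := List.mem_range.mp hj
  have h1 : (z.take k).take j = z.take j := by rw [List.take_take, min_eq_left hj'.le]
  have h2 : (z.take k).getD j default = z.getD j default := by
    simp [List.getD, List.getElem?_take, hj']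
  rw [h1, h2]

lemma prod_indicator_eq {N I : Type*} (P : List A → N) (ι : List A → I) (i : N)
    (s : I → A) (z : List A) :
    (∏ k ∈ (Finset.range z.length).filter (fun k => P (z.take k) = i),
        (if s (ι (z.take k)) = z.getD k default then (1:ℝ) else 0))
      = if ∀ p ∈ exper P ι i z, s p.1 = p.2 then 1 else 0 := by
  rw [Finset.prod_boole]
  refine if_congr ?_ rfl rfl
  unfold exper
  simp only [List.mem_filterMap, List.mem_range, Finset.mem_filter, Finset.mem_range]
  constructor
  · rintro h p ⟨k, hk, hp⟩
    by_cases hP : P (z.take k) = i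
    · rw [if_pos hP] at hp
      obtain rfl : (ι (z.take k), z.getD k default) = p := Option.some_injective _ hp
      exact h k ⟨hk, hP⟩
    · rw [if_neg hP] at hp
      exact absurd hp (by simp)
  · rintro h k ⟨hk, hP⟩
    exact h (ι (z.take k), z.getD k default) ⟨k, hk, by rw [if_pos hP]⟩

/-- Kuhn's theorem, mixed-to-behavioral direction: in a finite extensive-form
game, if player `i` has perfect recall, then for every mixed strategy `μ` of
player `i` there is a behavioral strategy `b` of player `i` that is equivalent to
it: against every fixed profile `β` of behavioral strategies of the other players
(including the chance policy), `μ` and `b` induce the same probability on every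
terminal history. -/
theorem kuhn_mixed_to_behavioral
    {N I : Type*} [Fintype I]
    (i : N)                                   -- the distinguished player
    (H : Finset (List A)) (hne : H.Nonempty)
    (hprefix : ∀ h ∈ H, ∀ g : List A, g <+: h → g ∈ H)
    (havail : ∀ h ∈ H, ¬IsTerminal H h → (avail H h).Nonempty)
    (P : List A → N)                          -- turn function
    (ι : List A → I)                          -- information sets of player i
    -- histories in the same information set of `i` have the same available actions:
    (hinfo : ∀ h ∈ H, ∀ h' ∈ H, ¬IsTerminal H h → ¬IsTerminal H h' →
      P h = i → P h' = i → ι h = ι h' → avail H h = avail H h')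
    -- perfect recall of player `i`:
    (hrecall : ∀ h ∈ H, ∀ h' ∈ H, ¬IsTerminal H h → ¬IsTerminal H h' →
      P h = i → P h' = i → ι h = ι h' → exper P ι i h = exper P ι i h')
    -- a mixed strategy of player `i`: a probability distribution over pure strategies
    (μ : (I → A) → ℝ)
    (hμ0 : ∀ s : I → A, 0 ≤ μ s)
    (hμ1 : ∑ s : I → A, μ s = 1)
    (hμsupp : ∀ s : I → A, μ s ≠ 0 →
      ∀ h ∈ H, ¬IsTerminal H h → P h = i → s (ι h) ∈ avail H h) :
    ∃ b : I → A → ℝ,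
      -- `b` is a behavioral strategy of player `i`:
      (∀ h ∈ H, ¬IsTerminal H h → P h = i →
        (∀ a ∈ avail H h, 0 ≤ b (ι h) a) ∧ ∑ a ∈ avail H h, b (ι h) a = 1) ∧
      -- equivalence against every behavioral profile `β` of the other players:
      ∀ β : List A → A → ℝ,
        (∀ h ∈ H, ¬IsTerminal H h → P h ≠ i →
          (∀ a ∈ avail H h, 0 ≤ β h a) ∧ ∑ a ∈ avail H h, β h a = 1) →
        ∀ z ∈ H, IsTerminal H z →
          (∑ s : I → A, μ s *
              pathProb (fun h a =>
                if P h = i then (if s (ι h) = a then (1 : ℝ) else 0) else β h a) z)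
            = pathProb (fun h a => if P h = i then b (ι h) a else β h a) z := by
  classical
  refine ⟨behav H P ι i μ, ?_, ?_⟩
  · -- behavioral-strategy conditions
    intro h hH hnt hP
    have hb := behav_eq H P ι i μ hinfo hrecall h hH hnt hP
    have hEnn : 0 ≤ W μ (exper P ι i h) := W_nonneg μ hμ0 _
    constructor
    · intro a _
      rw [hb a]
      split
      · positivity
      · exact div_nonneg (W_nonneg μ hμ0 _) hEnn
    · by_cases h0 : W μ (exper P ι i h) = 0
      · simp only [hb, h0, if_true]
        rw [Finset.sum_const, nsmul_eq_mul, mul_inv_cancel₀]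
        exact_mod_cast Finset.card_ne_zero_of_mem (havail h hH hnt).choose_spec
      · simp only [hb, h0, if_false]
        rw [← Finset.sum_div, div_eq_one_iff_eq h0]
        unfold W
        rw [Finset.sum_comm]
        refine Finset.sum_congr rfl fun s _ => ?_
        by_cases hs : μ s = 0
        · simp [hs]
        · have hmem : s (ι h) ∈ avail H h := hμsupp s hs h hH hnt hP
          have hiff : ∀ a : A, (∀ p ∈ exper P ι i h ++ [(ι h, a)], s p.1 = p.2)
              ↔ ((∀ p ∈ exper P ι i h, s p.1 = p.2) ∧ s (ι h) = a) := by
            intro a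
            constructor
            · intro hall
              exact ⟨fun p hp => hall p (List.mem_append_left _ hp),
                hall (ι h, a) (List.mem_append_right _ (List.mem_singleton_self _))⟩
            · rintro ⟨h1, h2⟩ p hp
              rcases List.mem_append.mp hp with hp | hp
              · exact h1 p hp
              · rw [List.mem_singleton] at hp; subst hp; exact h2
          simp only [hiff]
          by_cases hc : ∀ p ∈ exper P ι i h, s p.1 = p.2
          · have hx : ∀ x : A, ((∀ p ∈ exper P ι i h, s p.1 = p.2) ∧ s (ι h) = x) ↔ s (ι h) = x :=
              fun x => and_iff_right hc
            simp only [mul_ite, mul_one, mul_zero, hx]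
            rw [Finset.sum_ite_eq, if_pos hmem, if_pos hc]
          · simp only [hc, false_and, if_false, mul_zero, Finset.sum_const_zero]
  · -- equivalence
    intro β hβ z hzH hzT
    have key : ∀ s : I → A,
        pathProb (fun h a => if P h = i then (if s (ι h) = a then (1:ℝ) else 0) else β h a) z
        = (if ∀ p ∈ exper P ι i z, s p.1 = p.2 then (1:ℝ) else 0) *
          ∏ k ∈ (Finset.range z.length).filter (fun k => ¬ P (z.take k) = i),
            β (z.take k) (z.getD k default) := by
      intro s
      unfold pathProb
      rw [← Finset.prod_filter_mul_prod_filter_not (Finset.range z.length)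
        (fun k => P (z.take k) = i)]
      congr 1
      · refine Eq.trans ?_ ((prod_indicator_eq P ι i s z).trans ?_)
        · exact Finset.prod_congr rfl fun k hk => if_pos (Finset.mem_filter.mp hk).2
        · congr!
      · exact Finset.prod_congr rfl fun k hk => if_neg (Finset.mem_filter.mp hk).2
    have keyb : pathProb (fun h a => if P h = i then behav H P ι i μ (ι h) a else β h a) z
        = (∏ k ∈ (Finset.range z.length).filter (fun k => P (z.take k) = i),
            behav H P ι i μ (ι (z.take k)) (z.getD k default)) *
          ∏ k ∈ (Finset.range z.length).filter (fun k => ¬ P (z.take k) = i),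
            β (z.take k) (z.getD k default) := by
      unfold pathProb
      rw [← Finset.prod_filter_mul_prod_filter_not (Finset.range z.length)
        (fun k => P (z.take k) = i)]
      congr 1
      · exact Finset.prod_congr rfl fun k hk => if_pos (Finset.mem_filter.mp hk).2
      · exact Finset.prod_congr rfl fun k hk => if_neg (Finset.mem_filter.mp hk).2
    simp only [key, keyb, ← mul_assoc]
    rw [← Finset.sum_mul]
    congr 1
    have main : ∀ k, k ≤ z.length →
        (∏ j ∈ (Finset.range k).filter (fun j => P (z.take j) = i),
          behav H P ι i μ (ι (z.take j)) (z.getD j default))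
        = W μ ((List.range k).filterMap
            (fun j => if P (z.take j) = i then some (ι (z.take j), z.getD j default) else none)) := by
      intro k
      induction k with
      | zero => intro _; simp [W, hμ1]
      | succ k ih =>
        intro hk1
        have hk : k < z.length := hk1
        have htkH : z.take k ∈ H := hprefix z hzH _ (List.take_prefix k z)
        have hsucc : z.take (k+1) = z.take k ++ [z.getD k default] := by
          rw [List.take_succ]
          congr 1
          rw [List.getD_eq_getElem z default hk]
          simp [List.getElem?_eq_getElem hk]
        have hnt : ¬ IsTerminal H (z.take k) := by
          rintro ⟨-, hno⟩
          exact hno (z.getD k default) (hsucc ▸ hprefix z hzH _ (List.take_prefix (k+1) z))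
        rw [Finset.prod_filter, Finset.prod_range_succ, ← Finset.prod_filter,
            List.range_succ, List.filterMap_append, ih hk.le]
        by_cases hPk : P (z.take k) = i
        · rw [if_pos hPk]
          simp only [List.filterMap_cons, List.filterMap_nil, if_pos hPk]
          have hb := behav_eq H P ι i μ hinfo hrecall (z.take k) htkH hnt hPk
          have hEtake := exper_take P ι i z hk.le
          set e := (List.range k).filterMap
            (fun j => if P (z.take j) = i then some (ι (z.take j), z.getD j default) else none)
            with he
          rcases eq_or_ne (W μ e) 0 with h0 | h0
          · rw [h0, zero_mul]
            have h1 := W_append_le μ hμ0 e [(ι (z.take k), z.getD k default)]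
            have h2 := W_nonneg μ hμ0 (e ++ [(ι (z.take k), z.getD k default)])
            rw [h0] at h1
            linarith
          · rw [hb, hEtake, if_neg h0, mul_comm (W μ e)]
            field_simp
        · rw [if_neg hPk]
          simp only [List.filterMap_cons, List.filterMap_nil, if_neg hPk]
          simp
    rw [main z.length le_rfl]
    unfold W
    refine Finset.sum_congr rfl fun s _ => ?_
    congr!


end Stmt0
end

section
/- In every finite extensive-form game, if player i has perfect recall, then for every behavioral strategy of player i there exists an equivalent mixed strategy of player i; that is, against every fixed profile of behavioral strategies of the other players (including a fixed chance policy), the behavioral strategy and the mixed strategy induce the same probability on every terminal history. (Theorem 1, Planning Equivalence / Kuhn's theorem, behavioral-to-mixed direction.) -/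
open scoped BigOperators Classical

namespace Stmt1

variable {A : Type*} [Fintype A] [DecidableEq A] [Inhabited A]

/-- The available actions at a history `h`: those `a` with `h ++ [a] ∈ H`. -/
def avail (H : Finset (List A)) (h : List A) : Finset A :=
  Finset.univ.filter (fun a => h ++ [a] ∈ H)

/-- A history is terminal if it lies in `H` and no one-step extension does. -/
def IsTerminal (H : Finset (List A)) (h : List A) : Prop :=
  h ∈ H ∧ ∀ a : A, h ++ [a] ∉ H

/-- The probability of reaching the history `z` when at every proper prefix
`z.take k` the action `z.getD k default` taken there along `z` is chosen with
probability `f (z.take k) (z.getD k default)`. -/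
noncomputable def pathProb (f : List A → A → ℝ) (z : List A) : ℝ :=
  ∏ k ∈ Finset.range z.length, f (z.take k) (z.getD k default)

/-- Player `i`'s experience along a history `h`: the list of pairs
(information set, action chosen) recorded at exactly those proper prefixes of `h`
at which `i` moves (`ι` assigns information sets, `P` is the turn function). -/
noncomputable def exper {N I : Type*} (P : List A → N) (ι : List A → I) (i : N)
    (h : List A) : List (I × A) :=
  (List.range h.length).filterMap
    (fun k => if P (h.take k) = i then some (ι (h.take k), h.getD k default) else none)

/-- Kuhn's theorem, behavioral-to-mixed direction: in a finite extensive-form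
game, if player `i` has perfect recall, then for every behavioral strategy `b` of
player `i` there is a mixed strategy `μ` of player `i` that is equivalent to it:
against every fixed profile `β` of behavioral strategies of the other players
(including the chance policy), `b` and `μ` induce the same probability on every
terminal history. -/
theorem kuhn_behavioral_to_mixed
    {N I : Type*} [Fintype I]
    (i : N)                                   -- the distinguished player
    (H : Finset (List A)) (hne : H.Nonempty)
    (hprefix : ∀ h ∈ H, ∀ g : List A, g <+: h → g ∈ H)
    (havail : ∀ h ∈ H, ¬IsTerminal H h → (avail H h).Nonempty)
    (P : List A → N)                          -- turn function
    (ι : List A → I)                          -- information sets of player i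
    -- histories in the same information set of `i` have the same available actions:
    (hinfo : ∀ h ∈ H, ∀ h' ∈ H, ¬IsTerminal H h → ¬IsTerminal H h' →
      P h = i → P h' = i → ι h = ι h' → avail H h = avail H h')
    -- perfect recall of player `i`:
    (hrecall : ∀ h ∈ H, ∀ h' ∈ H, ¬IsTerminal H h → ¬IsTerminal H h' →
      P h = i → P h' = i → ι h = ι h' → exper P ι i h = exper P ι i h')
    -- a behavioral strategy of player `i`:
    (b : I → A → ℝ)
    (hb : ∀ h ∈ H, ¬IsTerminal H h → P h = i →
      (∀ a ∈ avail H h, 0 ≤ b (ι h) a) ∧ ∑ a ∈ avail H h, b (ι h) a = 1) :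
    ∃ μ : (I → A) → ℝ,
      -- `μ` is a mixed strategy of player `i`:
      (∀ s : I → A, 0 ≤ μ s) ∧
      (∑ s : I → A, μ s = 1) ∧
      (∀ s : I → A, μ s ≠ 0 →
        ∀ h ∈ H, ¬IsTerminal H h → P h = i → s (ι h) ∈ avail H h) ∧
      -- equivalence against every behavioral profile `β` of the other players:
      ∀ β : List A → A → ℝ,
        (∀ h ∈ H, ¬IsTerminal H h → P h ≠ i →
          (∀ a ∈ avail H h, 0 ≤ β h a) ∧ ∑ a ∈ avail H h, β h a = 1) →
        ∀ z ∈ H, IsTerminal H z →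
          pathProb (fun h a => if P h = i then b (ι h) a else β h a) z
            = (∑ s : I → A, μ s *
                pathProb (fun h a =>
                  if P h = i then (if s (ι h) = a then (1 : ℝ) else 0) else β h a) z) := by
  classical
  -- the canonical per-information-set distribution
  let q : I → A → ℝ := fun u a =>
    if hu : ∃ h, h ∈ H ∧ ¬IsTerminal H h ∧ P h = i ∧ ι h = u then
      (if a ∈ avail H hu.choose then b u a else 0)
    else (if a = default then 1 else 0)
  have hqspec : ∀ h ∈ H, ¬IsTerminal H h → P h = i →
      ∀ a, q (ι h) a = if a ∈ avail H h then b (ι h) a else 0 := by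
    intro h hH hnt hP a
    have hu : ∃ h', h' ∈ H ∧ ¬IsTerminal H h' ∧ P h' = i ∧ ι h' = ι h := ⟨h, hH, hnt, hP, rfl⟩
    obtain ⟨h0H, h0nt, h0P, h0ι⟩ := hu.choose_spec
    have hav : avail H hu.choose = avail H h :=
      hinfo _ h0H _ hH h0nt hnt h0P hP h0ι
    simp only [q, dif_pos hu, hav]
  have hq0 : ∀ u a, 0 ≤ q u a := by
    intro u a
    simp only [q]
    split
    · next hu =>
      obtain ⟨h0H, h0nt, h0P, h0ι⟩ := hu.choose_spec
      split
      · next ha =>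
        have := (hb _ h0H h0nt h0P).1 a ha
        rwa [h0ι] at this
      · exact le_refl 0
    · split <;> norm_num
  have hq1 : ∀ u, (∑ a : A, q u a) = 1 := by
    intro u
    simp only [q]
    split
    · next hu =>
      obtain ⟨h0H, h0nt, h0P, h0ι⟩ := hu.choose_spec
      rw [Finset.sum_ite_mem, Finset.univ_inter]
      have := (hb _ h0H h0nt h0P).2
      rwa [h0ι] at this
    · simp
  refine ⟨fun s => ∏ u : I, q u (s u), ?_, ?_, ?_, ?_⟩
  · intro s; exact Finset.prod_nonneg fun u _ => hq0 u (s u)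
  · rw [← Fintype.piFinset_univ, ← Finset.prod_univ_sum (fun _ => (Finset.univ : Finset A)) q]
    simp [hq1]
  · intro s hs h hH hnt hP
    by_contra hna
    refine hs (Finset.prod_eq_zero (Finset.mem_univ (ι h)) ?_)
    rw [hqspec h hH hnt hP, if_neg hna]
  intro β hβ z hz hzt
  set n := z.length with hn
  have htk : ∀ k, z.take k ∈ H := fun k => hprefix z hz _ (List.take_prefix k z)
  have hstep : ∀ k, k < n → z.take (k + 1) = z.take k ++ [z.getD k default] := by
    intro k hk
    rw [List.take_succ, List.getElem?_eq_getElem hk, List.getD_eq_getElem z default hk]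
    rfl
  have hnt : ∀ k, k < n → ¬IsTerminal H (z.take k) := by
    intro k hk ht
    exact ht.2 (z.getD k default) (by rw [← hstep k hk]; exact htk (k + 1))
  have hava : ∀ k, k < n → z.getD k default ∈ avail H (z.take k) := by
    intro k hk
    simp only [avail, Finset.mem_filter, Finset.mem_univ, true_and]
    rw [← hstep k hk]; exact htk (k + 1)
  set F : ℕ → Option (I × A) := fun k =>
    if P (z.take k) = i then some (ι (z.take k), z.getD k default) else none with hF
  have hexp : ∀ m, m ≤ n → exper P ι i (z.take m) = (List.range m).filterMap F := by
    intro m hm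
    unfold exper
    have hlen : (z.take m).length = m := by
      rw [List.length_take]; omega
    rw [hlen]
    apply List.filterMap_congr
    intro k hk
    have hk' : k < m := List.mem_range.mp hk
    have h1 : (z.take m).take k = z.take k := by
      rw [List.take_take]; congr 1; omega
    have h2 : (z.take m).getD k default = z.getD k default := by
      have hkl : k < (z.take m).length := by omega
      rw [List.getD_eq_getElem _ _ hkl, List.getElem_take,
        ← List.getD_eq_getElem z default (by omega : k < z.length)]
    rw [h1, h2, hF]
  have hinj' : ∀ k k', k < k' → k' < n → P (z.take k) = i → P (z.take k') = i →
      ι (z.take k) ≠ ι (z.take k') := by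
    intro k k' hkk hk' hPk hPk' hι
    have heq := hrecall _ (htk k) _ (htk k') (hnt k (by omega)) (hnt k' (by omega)) hPk hPk' hι
    rw [hexp k (by omega), hexp k' (by omega)] at heq
    have hcp : k' = (k + 1) + (k' - (k + 1)) := by omega
    have hlen := congrArg List.length heq
    rw [hcp, List.range_add, List.filterMap_append, List.range_succ, List.filterMap_append] at hlen
    have hFk : F k = some (ι (z.take k), z.getD k default) := by
      rw [hF]; exact if_pos hPk
    rw [List.length_append, List.length_append] at hlen
    simp only [List.filterMap_cons, List.filterMap_nil, hFk, List.length_cons,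
      List.length_nil] at hlen
    omega
  have hinj : ∀ k ∈ (Finset.range n).filter (fun k => P (z.take k) = i),
      ∀ k' ∈ (Finset.range n).filter (fun k => P (z.take k) = i),
      ι (z.take k) = ι (z.take k') → k = k' := by
    intro k hk k' hk' hι
    simp only [Finset.mem_filter, Finset.mem_range] at hk hk'
    rcases lt_trichotomy k k' with h | h | h
    · exact absurd hι (hinj' k k' h hk'.1 hk.2 hk'.2)
    · exact h
    · exact absurd hι.symm (hinj' k' k h hk.1 hk'.2 hk.2)
  set Ki := (Finset.range n).filter (fun k => P (z.take k) = i) with hKi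
  set C : ℝ := ∏ k ∈ (Finset.range n).filter (fun k => ¬P (z.take k) = i),
    β (z.take k) (z.getD k default) with hC
  -- the LHS splits
  have hLHS : pathProb (fun h a => if P h = i then b (ι h) a else β h a) z
      = (∏ k ∈ Ki, b (ι (z.take k)) (z.getD k default)) * C := by
    rw [pathProb, ← Finset.prod_filter_mul_prod_filter_not (Finset.range n)
      (fun k => P (z.take k) = i)]
    congr 1
    · exact Finset.prod_congr rfl fun k hk => by
        rw [if_pos (Finset.mem_filter.mp hk).2]
    · exact Finset.prod_congr rfl fun k hk => by
        rw [if_neg (Finset.mem_filter.mp hk).2]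
  -- the RHS per pure strategy
  have hRHSs : ∀ s : I → A,
      pathProb (fun h a => if P h = i then (if s (ι h) = a then (1 : ℝ) else 0) else β h a) z
      = (∏ k ∈ Ki, (if s (ι (z.take k)) = z.getD k default then (1 : ℝ) else 0)) * C := by
    intro s
    rw [pathProb, ← Finset.prod_filter_mul_prod_filter_not (Finset.range n)
      (fun k => P (z.take k) = i)]
    congr 1
    · exact Finset.prod_congr rfl fun k hk => by
        rw [if_pos (Finset.mem_filter.mp hk).2]
    · exact Finset.prod_congr rfl fun k hk => by
        rw [if_neg (Finset.mem_filter.mp hk).2]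
  -- the constrained product distribution
  set g : I → A → ℝ := fun u a => q u a *
    (if (∀ k ∈ Ki, ι (z.take k) = u → z.getD k default = a) then 1 else 0) with hg
  have hper : ∀ s : I → A,
      (∏ u : I, q u (s u)) * ∏ k ∈ Ki, (if s (ι (z.take k)) = z.getD k default then (1 : ℝ) else 0)
      = ∏ u : I, g u (s u) := by
    intro s
    rw [hg]
    simp only []
    rw [Finset.prod_mul_distrib]
    congr 1
    rw [Finset.prod_boole, Finset.prod_boole]
    congr 1
    simp only [eq_iff_iff]
    constructor
    · intro h u _ k hk hu
      exact (hu ▸ (h k hk)).symm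
    · intro h k hk
      exact (h (ι (z.take k)) (Finset.mem_univ _) k hk rfl).symm
  have hsumg : ∀ u : I, (∑ a : A, g u a)
      = if hu : ∃ k, k ∈ Ki ∧ ι (z.take k) = u then b u (z.getD hu.choose default) else 1 := by
    intro u
    split
    · next hu =>
      obtain ⟨hkKi, hkι⟩ := hu.choose_spec
      set k0 := hu.choose
      have hcond : ∀ a : A, (∀ k ∈ Ki, ι (z.take k) = u → z.getD k default = a)
          ↔ z.getD k0 default = a := by
        intro a
        constructor
        · intro h; exact h k0 hkKi hkι
        · intro h k hk hku
          have : k = k0 := hinj k hk k0 hkKi (by rw [hku, hkι])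
          rw [this]; exact h
      have : ∀ a : A, g u a = if z.getD k0 default = a then q u a else 0 := by
        intro a
        rw [hg]
        simp only []
        by_cases hh : z.getD k0 default = a
        · rw [if_pos ((hcond a).mpr hh), if_pos hh, mul_one]
        · rw [if_neg (fun hc => hh ((hcond a).mp hc)), if_neg hh, mul_zero]
      rw [Finset.sum_congr rfl fun a _ => this a]
      rw [Finset.sum_ite_eq]
      rw [if_pos (Finset.mem_univ _)]
      -- q u (z.getD k0 default) = b u (z.getD k0 default)
      have hk0n : k0 < n := by
        have := Finset.mem_filter.mp hkKi; exact Finset.mem_range.mp this.1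
      have hP0 : P (z.take k0) = i := (Finset.mem_filter.mp hkKi).2
      have := hqspec _ (htk k0) (hnt k0 hk0n) hP0 (z.getD k0 default)
      rw [hkι] at this
      rw [this, if_pos (hava k0 hk0n)]
    · next hu =>
      push_neg at hu
      have : ∀ a : A, g u a = q u a := by
        intro a
        rw [hg]
        simp only []
        rw [if_pos (fun k hk hku => absurd hku (hu k hk)), mul_one]
      rw [Finset.sum_congr rfl fun a _ => this a, hq1]
  -- pull the sum inside
  have hkey : (∑ s : I → A, (∏ u : I, q u (s u)) *
        ∏ k ∈ Ki, (if s (ι (z.take k)) = z.getD k default then (1 : ℝ) else 0))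
      = ∏ k ∈ Ki, b (ι (z.take k)) (z.getD k default) := by
    rw [Finset.sum_congr rfl fun s _ => hper s]
    rw [← Fintype.piFinset_univ, ← Finset.prod_univ_sum (fun _ => (Finset.univ : Finset A)) g]
    rw [Finset.prod_congr rfl fun u _ => hsumg u]
    set v : I → ℝ := fun u => if hu : ∃ k, k ∈ Ki ∧ ι (z.take k) = u
        then b u (z.getD hu.choose default) else 1 with hv
    calc (∏ u : I, v u)
        = ∏ u ∈ Ki.image (fun k => ι (z.take k)), v u := by
          refine (Finset.prod_subset (Finset.subset_univ _) ?_).symm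
          intro u _ hu
          rw [hv]
          simp only []
          rw [dif_neg]
          intro ⟨k, hk, hku⟩
          exact hu (Finset.mem_image.mpr ⟨k, hk, hku⟩)
      _ = ∏ k ∈ Ki, v (ι (z.take k)) :=
          Finset.prod_image (fun k hk k' hk' h => hinj k hk k' hk' h)
      _ = ∏ k ∈ Ki, b (ι (z.take k)) (z.getD k default) := ?_
    apply Finset.prod_congr rfl
    intro k hk
    rw [hv]
    simp only []
    have hu : ∃ k', k' ∈ Ki ∧ ι (z.take k') = ι (z.take k) := ⟨k, hk, rfl⟩
    rw [dif_pos hu]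
    obtain ⟨hk'Ki, hk'ι⟩ := hu.choose_spec
    have : hu.choose = k := hinj _ hk'Ki _ hk hk'ι
    rw [this]
  rw [hLHS]
  rw [Finset.sum_congr rfl fun s _ => by rw [hRHSs s, ← mul_assoc]]
  rw [← Finset.sum_mul, hkey]

end Stmt1
end

section
/- Let Q_a and Q_d be finite nonempty sets of pure plans for a follower (attacker) and a leader (defender), and let u_a, u_d : Q_a x Q_d -> R be utility functions, extended bilinearly to mixed strategies by expectation. Then a strong Stackelberg equilibrium exists: there exist a mixed leader strategy sigma_d* in Delta(Q_d) and a pure follower plan q_a* in Q_a such that q_a* is a best response to sigma_d* (i.e., u_a(q_a*, sigma_d*) >= u_a(q_a, sigma_d*) for all q_a in Q_a), and u_d(q_a*, sigma_d*) >= u_d(q_a, sigma_d) for every sigma_d in Delta(Q_d) and every pure best response q_a to sigma_d. In particular, the bi-level optimization defining the optimal purple teaming defense plan (Definition 6) with optimistic tie-breaking attains its maximum. -/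
open scoped BigOperators

/-!
The leader's strategies split into the best-response regions of the finitely many pure follower
plans. Each region is a compact subset of the simplex (cut out by the closed conditions
`u_a(q, σ) ≤ u_a(q_a, σ)`), so the leader's utility attains its maximum on each nonempty one, and
the best of these finitely many maxima is a strong Stackelberg equilibrium.
-/

namespace Stmt9

/-- `σ` lies in the simplex `Δ(Q)`: nonnegative and sums to 1. -/
def InSimplex {Q : Type*} [Fintype Q] (σ : Q → ℝ) : Prop :=
  (∀ q, 0 ≤ σ q) ∧ ∑ q : Q, σ q = 1

/-- Expected utility `u(q_a, σ_d)` of a pure follower plan against a mixed leader plan. -/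
noncomputable def eU {Qa Qd : Type*} [Fintype Qd]
    (u : Qa → Qd → ℝ) (qa : Qa) (σd : Qd → ℝ) : ℝ :=
  ∑ qd : Qd, σd qd * u qa qd

/-- A pure follower plan `qa` is a best response to the mixed leader plan `σd`. -/
def IsBestResponse {Qa Qd : Type*} [Fintype Qd]
    (ua : Qa → Qd → ℝ) (qa : Qa) (σd : Qd → ℝ) : Prop :=
  ∀ qa' : Qa, eU ua qa' σd ≤ eU ua qa σd

theorem exists_forall_le_of_finite_of_isCompact {X ι α : Type*} [TopologicalSpace X] [Finite ι]
    [LinearOrder α] [TopologicalSpace α] [ClosedIciTopology α]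
    {s : ι → Set X} {f : ι → X → α} (hs : ∀ i, IsCompact (s i))
    (hf : ∀ i, ContinuousOn (f i) (s i)) (hne : ∃ i, (s i).Nonempty) :
    ∃ i, ∃ x ∈ s i, ∀ j, ∀ y ∈ s j, f j y ≤ f i x := by
  have hvalues : IsCompact (⋃ i, f i '' s i) :=
    isCompact_iUnion fun i => (hs i).image_of_continuousOn (hf i)
  obtain ⟨i, x, hx⟩ := hne
  obtain ⟨v, hv, hvmax⟩ := hvalues.exists_isGreatest ⟨f i x, Set.mem_iUnion.2 ⟨i, x, hx, rfl⟩⟩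
  obtain ⟨i', x', hx', rfl⟩ := by simpa only [Set.mem_iUnion, Set.mem_image] using hv
  exact ⟨i', x', hx', fun j y hy => hvmax (Set.mem_iUnion.2 ⟨j, y, hy, rfl⟩)⟩

theorem setOf_inSimplex_eq_stdSimplex (Q : Type*) [Fintype Q] :
    {σ : Q → ℝ | InSimplex σ} = stdSimplex ℝ Q :=
  rfl

theorem continuous_eU {Qa Qd : Type*} [Fintype Qd] (u : Qa → Qd → ℝ) (qa : Qa) :
    Continuous (eU u qa) :=
  continuous_finsetSum _ fun qd _ => (continuous_apply qd).mul continuous_const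

theorem isClosed_setOf_isBestResponse {Qa Qd : Type*} [Fintype Qd] (ua : Qa → Qd → ℝ) (qa : Qa) :
    IsClosed {σ : Qd → ℝ | IsBestResponse ua qa σ} := by
  simp only [IsBestResponse, Set.ofPred_forall]
  exact isClosed_iInter fun qa' => isClosed_le (continuous_eU ua qa') (continuous_eU ua qa)

theorem exists_isBestResponse {Qa Qd : Type*} [Finite Qa] [Nonempty Qa] [Fintype Qd]
    (ua : Qa → Qd → ℝ) (σ : Qd → ℝ) : ∃ qa, IsBestResponse ua qa σ :=
  Finite.exists_max fun qa => eU ua qa σ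

/-- Existence of a strong Stackelberg equilibrium: a mixed leader (defender)
strategy `σd⋆` together with a pure follower (attacker) best response `qa⋆` such
that no mixed leader strategy, paired with any pure best response of the follower
to it, gives the leader a higher utility.  In particular the bi-level optimization
defining the optimal purple teaming defense plan (with optimistic tie-breaking)
attains its maximum. -/
theorem strong_stackelberg_exists
    {Qa Qd : Type*} [Fintype Qa] [Nonempty Qa] [Fintype Qd] [Nonempty Qd]
    (ua ud : Qa → Qd → ℝ) :
    ∃ (σdstar : Qd → ℝ) (qastar : Qa),
      InSimplex σdstar ∧
      IsBestResponse ua qastar σdstar ∧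
      (∀ σd : Qd → ℝ, InSimplex σd →
        ∀ qa : Qa, IsBestResponse ua qa σd →
          eU ud qa σd ≤ eU ud qastar σdstar) := by
  let region : Qa → Set (Qd → ℝ) := fun qa => {σ | InSimplex σ} ∩ {σ | IsBestResponse ua qa σ}
  have hcompact : ∀ qa, IsCompact (region qa) := fun qa => by
    simpa only [region, setOf_inSimplex_eq_stdSimplex] using
      (isCompact_stdSimplex ℝ Qd).inter_right (isClosed_setOf_isBestResponse ua qa)
  have hne : ∃ qa, (region qa).Nonempty := by
    obtain ⟨σ₀, hσ₀⟩ : (stdSimplex ℝ Qd).Nonempty := Set.nonempty_coe_sort.1 inferInstance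
    obtain ⟨qa, hqa⟩ := exists_isBestResponse ua σ₀
    exact ⟨qa, σ₀, hσ₀, hqa⟩
  obtain ⟨qastar, σdstar, ⟨hsimplex, hbest⟩, hmax⟩ := exists_forall_le_of_finite_of_isCompact
    hcompact (fun qa => (continuous_eU ud qa).continuousOn) hne
  exact ⟨σdstar, qastar, hsimplex, hbest, fun σd hσd qa hqa => hmax qa σd ⟨hσd, hqa⟩⟩

end Stmt9
end
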